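/- arXiv:2502.14108 — 4 statements merged into one kernel-verified Lean document; each statement's English description precedes it below -/
import Mathlib

section
/- Let m>0 and let r,e,e',T',r',Ω be real numbers with 2m<r<3m, e>0, e'>0, Ω≥0, and set β=e·(1−2m/r). Assume the causality inequality −β·T'² + r'² + 2√e·√(2m/r)·T'·r' + r²·Ω ≤ 0 and that (T',r',Ω)≠(0,0,0). Then −(m/r²)·β·T'² − (1/2)·β²·(e'/e²)·T'² + (m/r²)·r'² − (m/r)·(e'/e)·r'² + [(2m/r²)·√(2m/r)·√e + β·(e'/e²)·√(2m/r)·√e]·T'·r' + (r−2m)·Ω < 0. -/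
/-!
With `s = √(2m/r)` and `u = √e` (so `β = u²(1 - s²)` and `m = s²r/2`), the radial acceleration
equals `(m/r²)·C + (r - 3m)·Ω - (e'/2e)·Q²`, where `C ≤ 0` is the left side of the causality
inequality and `Q = u(1 - s²)T' - s r'`. All three terms are nonpositive, and `r < 3m` makes the
middle one strict unless `Ω = 0`. If the sum vanished, then `Ω = 0` and `Q = 0`; on the line
`Q = 0` the causal form equals `u²(1 - s²)T'²/s² ≥ 0`, so causality forces `T' = 0` and `r' = 0`.
-/

lemma radial_acceleration_eq {m r e e' T' r' Ω β s u : ℝ} (hr : r ≠ 0) (he : e ≠ 0)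
    (hs : s ^ 2 = 2 * m / r) (hu : u ^ 2 = e) (hβ : β = e * (1 - 2 * m / r)) :
    -(m / r ^ 2) * β * T' ^ 2 - (1 / 2) * β ^ 2 * (e' / e ^ 2) * T' ^ 2
      + (m / r ^ 2) * r' ^ 2 - (m / r) * (e' / e) * r' ^ 2
      + ((2 * m / r ^ 2) * s * u + β * (e' / e ^ 2) * s * u) * T' * r'
      + (r - 2 * m) * Ω
      = (m / r ^ 2) * (-β * T' ^ 2 + r' ^ 2 + 2 * u * s * T' * r' + r ^ 2 * Ω)
        + (r - 3 * m) * Ω - e' / (2 * e) * (u * (1 - s ^ 2) * T' - s * r') ^ 2 := by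
  have hm : m = s ^ 2 * r / 2 := by rw [hs]; field_simp
  have hu0 : u ≠ 0 := by rintro rfl; exact he (by rw [← hu]; ring)
  subst hβ hu hm
  field_simp
  ring

lemma radial_vector_eq_zero_of_causal {s u T' r' : ℝ} (hs : 0 < s) (hs1 : s < 1) (hu : 0 < u)
    (hcausal : -(u ^ 2 * (1 - s ^ 2)) * T' ^ 2 + r' ^ 2 + 2 * u * s * T' * r' ≤ 0)
    (hQ : s * r' = u * (1 - s ^ 2) * T') :
    T' = 0 ∧ r' = 0 := by
  have hform : s ^ 2 * (-(u ^ 2 * (1 - s ^ 2)) * T' ^ 2 + r' ^ 2 + 2 * u * s * T' * r')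
      = u ^ 2 * (1 - s ^ 2) * T' ^ 2 := by
    linear_combination (s * r' + u * (1 - s ^ 2) * T' + 2 * u * s ^ 2 * T') * hQ
  have hcoef : 0 < u ^ 2 * (1 - s ^ 2) := mul_pos (by positivity) (by nlinarith)
  have hT' : T' = 0 := by
    have hle : u ^ 2 * (1 - s ^ 2) * T' ^ 2 ≤ 0 :=
      hform ▸ mul_nonpos_of_nonneg_of_nonpos (sq_nonneg s) hcausal
    exact pow_eq_zero_iff two_ne_zero |>.1 <|
      le_antisymm (nonpos_of_mul_nonpos_right hle hcoef) (sq_nonneg T')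
  refine ⟨hT', ?_⟩
  simpa [hT', hs.ne'] using hQ

/-- Pointwise algebraic core of Proposition 1 of the paper: at a point of the
region `2m < r < 3m`, the causality of the tangent vector forces the radial
acceleration of a causal geodesic of the smoothed Lorentzian-Euclidean
Schwarzschild metric in Gullstrand–Painlevé coordinates to be negative. -/
theorem radial_acceleration_neg
    (m r e e' T' r' Ω β : ℝ) (hm : 0 < m)
    (hr1 : 2 * m < r) (hr2 : r < 3 * m)
    (he : 0 < e) (he' : 0 < e') (hΩ : 0 ≤ Ω)
    (hβ : β = e * (1 - 2 * m / r))
    (hcausal : -β * T' ^ 2 + r' ^ 2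
        + 2 * Real.sqrt e * Real.sqrt (2 * m / r) * T' * r' + r ^ 2 * Ω ≤ 0)
    (hnz : (T', r', Ω) ≠ ((0 : ℝ), (0 : ℝ), (0 : ℝ))) :
    -(m / r ^ 2) * β * T' ^ 2 - (1 / 2) * β ^ 2 * (e' / e ^ 2) * T' ^ 2
      + (m / r ^ 2) * r' ^ 2 - (m / r) * (e' / e) * r' ^ 2
      + ((2 * m / r ^ 2) * Real.sqrt (2 * m / r) * Real.sqrt e
          + β * (e' / e ^ 2) * Real.sqrt (2 * m / r) * Real.sqrt e) * T' * r'
      + (r - 2 * m) * Ω < 0 := by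
  have hr : 0 < r := by linarith
  set s := Real.sqrt (2 * m / r)
  set u := Real.sqrt e
  have hs : s ^ 2 = 2 * m / r := Real.sq_sqrt (by positivity)
  have hu : u ^ 2 = e := Real.sq_sqrt he.le
  have hβ' : β = u ^ 2 * (1 - s ^ 2) := by rw [hβ, hu, hs]
  rw [radial_acceleration_eq hr.ne' he.ne' hs hu hβ]
  by_contra! hge
  have hA : m / r ^ 2 * (-β * T' ^ 2 + r' ^ 2 + 2 * u * s * T' * r' + r ^ 2 * Ω) ≤ 0 :=
    mul_nonpos_of_nonneg_of_nonpos (by positivity) hcausal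
  have hB : (r - 3 * m) * Ω ≤ 0 := mul_nonpos_of_nonpos_of_nonneg (by linarith) hΩ
  have hK : 0 ≤ e' / (2 * e) * (u * (1 - s ^ 2) * T' - s * r') ^ 2 := by positivity
  have hΩ0 : Ω = 0 := by
    simpa [sub_eq_zero, hr2.ne] using (show (r - 3 * m) * Ω = 0 by linarith)
  have hQ : s * r' = u * (1 - s ^ 2) * T' := by
    have hsq : e' / (2 * e) * (u * (1 - s ^ 2) * T' - s * r') ^ 2 = 0 := by linarith
    have hk : e' / (2 * e) ≠ 0 := by positivity
    rw [mul_eq_zero, or_iff_right hk, sq_eq_zero_iff, sub_eq_zero] at hsq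
    exact hsq.symm
  have hs1 : s < 1 := by
    rw [← Real.sqrt_one, Real.sqrt_lt_sqrt_iff (by positivity), div_lt_one hr]; linarith
  obtain ⟨hT', hr'⟩ := radial_vector_eq_zero_of_causal (by positivity) hs1 (by positivity)
    (by simpa [hβ', hΩ0] using hcausal) hQ
  exact hnz (by rw [hT', hr', hΩ0])
end

section
/- Let m>0 and let r,e,e',T',r',Ω be real numbers with 2m<r<3m, e>0, e'>0, Ω≥0, and set β=e·(1−2m/r). Assume 2√e·√(2m/r)·T'·r' ≤ β·T'² − r'² − r²·Ω. Then −(m/r²)·β·T'² − (1/2)·β²·(e'/e²)·T'² + (m/r²)·r'² − (m/r)·(e'/e)·r'² + [(2m/r²)·√(2m/r)·√e + β·(e'/e²)·√(2m/r)·√e]·T'·r' + (r−2m)·Ω ≤ −(m/r)·(e'/e)·r'² − (β/2)·(e'/e²)·r'² − (β/2)·(e'/e²)·r²·Ω + (r−3m)·Ω. -/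
/-- Key estimate (inequality (12)) in the proof of Proposition 1 of the paper:
the causality condition, rewritten as a bound on the cross term,
bounds the radial acceleration of a causal geodesic from above. -/
theorem radial_acceleration_estimate
    (m r e e' T' r' Ω β : ℝ) (hm : 0 < m)
    (hr1 : 2 * m < r) (hr2 : r < 3 * m)
    (he : 0 < e) (he' : 0 < e') (hΩ : 0 ≤ Ω)
    (hβ : β = e * (1 - 2 * m / r))
    (hcausal : 2 * Real.sqrt e * Real.sqrt (2 * m / r) * T' * r'
        ≤ β * T' ^ 2 - r' ^ 2 - r ^ 2 * Ω) :
    -(m / r ^ 2) * β * T' ^ 2 - (1 / 2) * β ^ 2 * (e' / e ^ 2) * T' ^ 2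
      + (m / r ^ 2) * r' ^ 2 - (m / r) * (e' / e) * r' ^ 2
      + ((2 * m / r ^ 2) * Real.sqrt (2 * m / r) * Real.sqrt e
          + β * (e' / e ^ 2) * Real.sqrt (2 * m / r) * Real.sqrt e) * T' * r'
      + (r - 2 * m) * Ω
    ≤ -(m / r) * (e' / e) * r' ^ 2 - (β / 2) * (e' / e ^ 2) * r' ^ 2
      - (β / 2) * (e' / e ^ 2) * r ^ 2 * Ω + (r - 3 * m) * Ω := by
  have hr0 : 0 < r := by linarith
  have hβnn : 0 ≤ β := by
    rw [hβ]
    have h1 : 2 * m / r ≤ 1 := by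
      rw [div_le_one hr0]; linarith
    have : 0 ≤ 1 - 2 * m / r := by linarith
    exact mul_nonneg he.le this
  have hc : 0 ≤ m / r ^ 2 + β / 2 * (e' / e ^ 2) := by
    have h1 : 0 ≤ m / r ^ 2 := by positivity
    have h2 : 0 ≤ β / 2 * (e' / e ^ 2) := by
      apply mul_nonneg (by linarith) (by positivity)
    linarith
  have key := mul_le_mul_of_nonneg_left hcausal hc
  have e1 : (m / r ^ 2 + β / 2 * (e' / e ^ 2)) *
      (2 * Real.sqrt e * Real.sqrt (2 * m / r) * T' * r')
      = ((2 * m / r ^ 2) * Real.sqrt (2 * m / r) * Real.sqrt e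
          + β * (e' / e ^ 2) * Real.sqrt (2 * m / r) * Real.sqrt e) * T' * r' := by
    ring
  have hrne : r ≠ 0 := hr0.ne'
  have hene : e ≠ 0 := he.ne'
  have e2 : (m / r ^ 2 + β / 2 * (e' / e ^ 2)) * (β * T' ^ 2 - r' ^ 2 - r ^ 2 * Ω)
      = (m / r ^ 2) * β * T' ^ 2 + (1 / 2) * β ^ 2 * (e' / e ^ 2) * T' ^ 2
        - (m / r ^ 2) * r' ^ 2 - (β / 2) * (e' / e ^ 2) * r' ^ 2
        - m * Ω - (β / 2) * (e' / e ^ 2) * r ^ 2 * Ω := by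
    field_simp
    ring
  rw [e1, e2] at key
  linarith
end

section
/- Let m>0, ρ>0, κ∈ℕ and r>0 with r≠2m. Then ε_{ρ,κ} is differentiable at r with derivative ε_{ρ,κ}'(r) = ε_{ρ,κ}(r) · ρ / ((2κ+1)·(r−2m)·((r−2m)² + ρ)). In particular ε_{ρ,κ}'(r) > 0. -/
/-- The smoothing function `ε_{ρ,κ}` of the paper, written with the real
odd-root convention: `ε_{ρ,κ}(r) = sgn(r−2m)·|r−2m|^{1/(2κ+1)} /
((r−2m)² + ρ)^{1/(2(2κ+1))}`. -/
noncomputable def epsSmooth (m ρ : ℝ) (κ : ℕ) (r : ℝ) : ℝ :=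
  Real.sign (r - 2 * m) * |r - 2 * m| ^ ((1 : ℝ) / (2 * κ + 1)) /
    ((r - 2 * m) ^ 2 + ρ) ^ ((1 : ℝ) / (2 * (2 * κ + 1)))

/-!
Writing `x = r - 2m` and `a = 1/(2κ+1)`, the function is `sgn x · |x|^a / (x² + ρ)^(a/2)`.
Away from `x = 0` the sign is locally constant, so logarithmic differentiation applies:
the logarithmic derivative is `a/x - (a/2)·2x/(x² + ρ) = aρ / (x(x² + ρ))`, and it has the
sign of `x`, as does the function itself.
-/

open Filter Topology

theorem HasDerivAt.div_of_logDeriv {𝕜 : Type*} [NontriviallyNormedField 𝕜] {f g : 𝕜 → 𝕜}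
    {x c d : 𝕜} (hf : HasDerivAt f (f x * c) x) (hg : HasDerivAt g (g x * d) x)
    (hgx : g x ≠ 0) : HasDerivAt (fun y => f y / g y) (f x / g x * (c - d)) x :=
  (hf.div hg hgx).congr_deriv (by field_simp)

theorem HasDerivAt.rpow_const_of_ne_zero {f : ℝ → ℝ} {f' x : ℝ} (p : ℝ) (hf : HasDerivAt f f' x)
    (hx : f x ≠ 0) : HasDerivAt (fun y => f y ^ p) (f x ^ p * (p * f' / f x)) x :=
  (hf.rpow_const (Or.inl hx)).congr_deriv (by rw [Real.rpow_sub_one hx]; ring)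

theorem hasDerivAt_sign_mul_abs_rpow (a : ℝ) {x : ℝ} (hx : x ≠ 0) :
    HasDerivAt (fun y => Real.sign y * |y| ^ a) (Real.sign x * |x| ^ a * (a / x)) x := by
  rcases hx.lt_or_gt with hneg | hpos
  · have h := ((hasDerivAt_neg x).rpow_const_of_ne_zero a (neg_ne_zero.2 hx)).neg
    refine (h.congr_of_eventuallyEq ?_).congr_deriv ?_
    · filter_upwards [eventually_lt_nhds hneg] with y hy
      simp [Real.sign_of_neg hy, abs_of_neg hy]
    · rw [Real.sign_of_neg hneg, abs_of_neg hneg]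
      field_simp
  · have h := (hasDerivAt_id x).rpow_const_of_ne_zero a hx
    refine (h.congr_of_eventuallyEq ?_).congr_deriv ?_
    · filter_upwards [eventually_gt_nhds hpos] with y hy
      rw [Real.sign_of_pos hy, abs_of_pos hy, one_mul, id]
    · rw [Real.sign_of_pos hpos, abs_of_pos hpos]
      simp

/-- The paper's smoothing of `sgn x`, before the shift `x = r - 2m` and with `a = 1/(2κ+1)`. -/
noncomputable def smoothSign (a ρ x : ℝ) : ℝ :=
  Real.sign x * |x| ^ a / (x ^ 2 + ρ) ^ (a / 2)

theorem hasDerivAt_smoothSign (a : ℝ) {ρ x : ℝ} (hρ : 0 ≤ ρ) (hx : x ≠ 0) :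
    HasDerivAt (smoothSign a ρ) (smoothSign a ρ x * (a * ρ / (x * (x ^ 2 + ρ)))) x := by
  have hD : 0 < x ^ 2 + ρ := by positivity
  have hg := ((hasDerivAt_pow 2 x).add_const ρ).rpow_const_of_ne_zero (a / 2) hD.ne'
  refine ((hasDerivAt_sign_mul_abs_rpow a hx).div_of_logDeriv hg
    (Real.rpow_pos_of_pos hD _).ne').congr_deriv ?_
  simp only [smoothSign]
  field_simp
  ring

theorem mul_smoothSign_pos (a : ℝ) {ρ x : ℝ} (hρ : 0 ≤ ρ) (hx : x ≠ 0) :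
    0 < x * smoothSign a ρ x := by
  have hD : 0 < x ^ 2 + ρ := by positivity
  have hsign : x * Real.sign x = |x| := by
    rcases hx.lt_or_gt with h | h
    · rw [Real.sign_of_neg h, abs_of_neg h, mul_neg_one]
    · rw [Real.sign_of_pos h, abs_of_pos h, mul_one]
  rw [smoothSign, ← mul_div_assoc, ← mul_assoc, hsign]
  have := abs_pos.2 hx
  positivity

theorem epsSmooth_eq_smoothSign (m ρ : ℝ) (κ : ℕ) :
    epsSmooth m ρ κ = fun r => smoothSign (1 / (2 * κ + 1)) ρ (r - 2 * m) := by
  ext r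
  rw [epsSmooth, smoothSign, div_div, mul_comm _ (2 : ℝ)]

theorem epsSmooth_hasDerivAt_general
    (m ρ : ℝ) (hρ : 0 < ρ) (κ : ℕ) (r : ℝ)
    (hne : r ≠ 2 * m) :
    HasDerivAt (epsSmooth m ρ κ)
      (epsSmooth m ρ κ r * ρ /
        ((2 * κ + 1) * (r - 2 * m) * ((r - 2 * m) ^ 2 + ρ))) r ∧
    0 < epsSmooth m ρ κ r * ρ /
        ((2 * κ + 1) * (r - 2 * m) * ((r - 2 * m) ^ 2 + ρ)) := by
  have hx : r - 2 * m ≠ 0 := sub_ne_zero.2 hne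
  rw [epsSmooth_eq_smoothSign]
  set a : ℝ := 1 / (2 * κ + 1)
  set ε := smoothSign a ρ (r - 2 * m)
  have hderiv : ε * ρ / ((2 * κ + 1) * (r - 2 * m) * ((r - 2 * m) ^ 2 + ρ))
      = ε * (a * ρ / ((r - 2 * m) * ((r - 2 * m) ^ 2 + ρ))) := by
    simp only [a]
    field_simp
  have hsq : ε * ρ / ((2 * κ + 1) * (r - 2 * m) * ((r - 2 * m) ^ 2 + ρ))
      = (r - 2 * m) * ε * ρ / ((2 * κ + 1) * (r - 2 * m) ^ 2 * ((r - 2 * m) ^ 2 + ρ)) := by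
    field_simp
  refine ⟨hderiv ▸ (hasDerivAt_smoothSign a hρ.le hx).comp_sub_const r (2 * m), ?_⟩
  have := mul_smoothSign_pos a hρ.le hx
  rw [hsq]
  positivity

/-- Away from the horizon `r = 2m`, the smoothing function `ε_{ρ,κ}` is
differentiable with derivative `ε_{ρ,κ}(r)·ρ/((2κ+1)(r−2m)((r−2m)²+ρ))`,
which is positive. -/
theorem epsSmooth_hasDerivAt
    (m ρ : ℝ) (hm : 0 < m) (hρ : 0 < ρ) (κ : ℕ) (r : ℝ) (hr : 0 < r)
    (hne : r ≠ 2 * m) :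
    HasDerivAt (epsSmooth m ρ κ)
      (epsSmooth m ρ κ r * ρ /
        ((2 * κ + 1) * (r - 2 * m) * ((r - 2 * m) ^ 2 + ρ))) r ∧
    0 < epsSmooth m ρ κ r * ρ /
        ((2 * κ + 1) * (r - 2 * m) * ((r - 2 * m) ^ 2 + ρ)) :=
  epsSmooth_hasDerivAt_general m ρ hρ κ r hne
end

section
/- Let t₀>0, set b = (2/3)·t₀^{3/2}, and define t(s) = (t₀^{3/2} − (3/2)s)^{2/3} for s∈[0,b). Then for all s∈[0,b): t(s)>0, t is twice differentiable at s with t''(s) + t'(s)²/(2·t(s)) = 0 and t(s)·t'(s)² = 1; moreover t(s) → 0 as s → b⁻. In particular, the unit-speed radial curve of the metric −t dt² arrives at the transition hypersurface {t=0} in the finite proper time b = (2/3)·t₀^{3/2}. -/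
/-!
Along a radial curve the constraint `t·t'² = 1` gives `t^{1/2} dt = -ds`, so
`t^{3/2}` decreases linearly at rate `3/2` and vanishes after proper time `(2/3)·t₀^{3/2}`.
Differentiating `t = u^{2/3}` for the affine `u = t₀^{3/2} - (3/2)s` gives `t' = -u^{-1/3}` and
`t'' = -(1/2)u^{-4/3}`, from which both equations are exponent bookkeeping.
-/

open Filter Topology

noncomputable section

namespace RadialCurve

theorem hasDerivAt_sub_mul_rpow {A c p s : ℝ} (hs : 0 < A - c * s) :
    HasDerivAt (fun x => (A - c * x) ^ p) (p * (A - c * s) ^ (p - 1) * -c) s := by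
  have hu : HasDerivAt (fun x => A - c * x) (-c) s := by
    simpa using ((hasDerivAt_id s).const_mul c).const_sub A
  exact (Real.hasDerivAt_rpow_const (Or.inl hs.ne')).comp s hu

/-- The unit-speed radial curve of `-t dt²` with `t(0)^{3/2} = A`. -/
def radialCurve (A s : ℝ) : ℝ := (A - 3 / 2 * s) ^ ((2 : ℝ) / 3)

variable {A s : ℝ}

theorem radialCurve_pos (hs : 0 < A - 3 / 2 * s) : 0 < radialCurve A s :=
  Real.rpow_pos_of_pos hs _

theorem hasDerivAt_radialCurve (hs : 0 < A - 3 / 2 * s) :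
    HasDerivAt (radialCurve A) (-(A - 3 / 2 * s) ^ (-(1 : ℝ) / 3)) s := by
  refine (hasDerivAt_sub_mul_rpow hs).congr_deriv ?_
  rw [show (2 : ℝ) / 3 - 1 = -1 / 3 by norm_num]
  ring

theorem deriv_radialCurve_eventuallyEq (hs : 0 < A - 3 / 2 * s) :
    deriv (radialCurve A) =ᶠ[𝓝 s] fun x => -(A - 3 / 2 * x) ^ (-(1 : ℝ) / 3) := by
  have hopen : IsOpen {x : ℝ | 0 < A - 3 / 2 * x} := isOpen_lt continuous_const (by fun_prop)
  filter_upwards [hopen.mem_nhds hs] with x hx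
  exact (hasDerivAt_radialCurve hx).deriv

theorem hasDerivAt_deriv_radialCurve (hs : 0 < A - 3 / 2 * s) :
    HasDerivAt (deriv (radialCurve A)) (-(1 / 2) * (A - 3 / 2 * s) ^ (-(4 : ℝ) / 3)) s := by
  refine HasDerivAt.congr_of_eventuallyEq ?_ (deriv_radialCurve_eventuallyEq hs)
  refine (hasDerivAt_sub_mul_rpow hs).neg.congr_deriv ?_
  rw [show -(1 : ℝ) / 3 - 1 = -4 / 3 by norm_num]
  ring

theorem deriv_radialCurve_sq (hs : 0 < A - 3 / 2 * s) :
    deriv (radialCurve A) s ^ 2 = (A - 3 / 2 * s) ^ (-(2 : ℝ) / 3) := by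
  rw [(hasDerivAt_radialCurve hs).deriv, neg_sq, ← Real.rpow_natCast, ← Real.rpow_mul hs.le]
  norm_num

theorem radialCurve_mul_deriv_sq (hs : 0 < A - 3 / 2 * s) :
    radialCurve A s * deriv (radialCurve A) s ^ 2 = 1 := by
  rw [deriv_radialCurve_sq hs, radialCurve, ← Real.rpow_add hs]
  norm_num

theorem radialCurve_geodesic (hs : 0 < A - 3 / 2 * s) :
    deriv (deriv (radialCurve A)) s + deriv (radialCurve A) s ^ 2 / (2 * radialCurve A s) = 0 := by
  have hsplit : (A - 3 / 2 * s) ^ (-(2 : ℝ) / 3) =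
      (A - 3 / 2 * s) ^ (-(4 : ℝ) / 3) * radialCurve A s := by
    rw [radialCurve, ← Real.rpow_add hs]
    norm_num
  rw [(hasDerivAt_deriv_radialCurve hs).deriv, deriv_radialCurve_sq hs, hsplit,
    mul_div_mul_right _ _ (radialCurve_pos hs).ne']
  ring

theorem tendsto_radialCurve_nhdsLT :
    Tendsto (radialCurve A) (𝓝[<] (2 / 3 * A)) (𝓝 0) := by
  have hcont : Continuous (radialCurve A) :=
    (continuous_const.sub (continuous_const.mul continuous_id)).rpow_const
      fun _ => Or.inr (by norm_num)
  have hzero : radialCurve A (2 / 3 * A) = 0 := by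
    rw [radialCurve, show A - 3 / 2 * (2 / 3 * A) = 0 by ring, Real.zero_rpow (by norm_num)]
  exact tendsto_nhdsWithin_of_tendsto_nhds (hzero ▸ hcont.tendsto _)

end RadialCurve

end

open RadialCurve in
theorem radial_curve_arrives_in_finite_time_general
    (t₀ b : ℝ)
    (hb : b = 2 / 3 * t₀ ^ ((3 : ℝ) / 2))
    (t : ℝ → ℝ)
    (ht : ∀ s, t s = (t₀ ^ ((3 : ℝ) / 2) - 3 / 2 * s) ^ ((2 : ℝ) / 3)) :
    (∀ s ∈ Set.Ico 0 b,
        0 < t s ∧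
        DifferentiableAt ℝ t s ∧ DifferentiableAt ℝ (deriv t) s ∧
        deriv (deriv t) s + (deriv t s) ^ 2 / (2 * t s) = 0 ∧
        t s * (deriv t s) ^ 2 = 1) ∧
      Filter.Tendsto t (nhdsWithin b (Set.Iio b)) (nhds 0) := by
  obtain rfl : t = radialCurve (t₀ ^ ((3 : ℝ) / 2)) := funext ht
  subst hb
  refine ⟨fun s hs => ?_, tendsto_radialCurve_nhdsLT⟩
  have hpos : 0 < t₀ ^ ((3 : ℝ) / 2) - 3 / 2 * s := by linarith [hs.2]
  exact ⟨radialCurve_pos hpos, (hasDerivAt_radialCurve hpos).differentiableAt,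
    (hasDerivAt_deriv_radialCurve hpos).differentiableAt, radialCurve_geodesic hpos,
    radialCurve_mul_deriv_sq hpos⟩

/-- Section 3, item (1) of the paper: for the signature-changing metric
`−t dt² + g_{ij}dx^i dx^j`, the unit-speed radial curve
`t(s) = (t₀^{3/2} − (3/2)s)^{2/3}` satisfies the geodesic equation
`t'' + t'²/(2t) = 0` and the unit-speed constraint `t·t'² = 1`, and arrives at
the transition hypersurface `{t = 0}` in the finite proper time
`b = (2/3)·t₀^{3/2}`. -/
theorem radial_curve_arrives_in_finite_time
    (t₀ b : ℝ) (ht₀ : 0 < t₀)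
    (hb : b = 2 / 3 * t₀ ^ ((3 : ℝ) / 2))
    (t : ℝ → ℝ)
    (ht : ∀ s, t s = (t₀ ^ ((3 : ℝ) / 2) - 3 / 2 * s) ^ ((2 : ℝ) / 3)) :
    (∀ s ∈ Set.Ico 0 b,
        0 < t s ∧
        DifferentiableAt ℝ t s ∧ DifferentiableAt ℝ (deriv t) s ∧
        deriv (deriv t) s + (deriv t s) ^ 2 / (2 * t s) = 0 ∧
        t s * (deriv t s) ^ 2 = 1) ∧
      Filter.Tendsto t (nhdsWithin b (Set.Iio b)) (nhds 0) :=
  radial_curve_arrives_in_finite_time_general t₀ b hb t ht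
end
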